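/- arXiv:2506.20559 — 5 statements merged into one kernel-verified Lean document; each statement's English description precedes it below -/
import Mathlib

section
/- The stabilizer Γ = {g ∈ GL₂(ℂ) : (t₁³+t₂³)∘g = t₁³+t₂³} consists exactly of the 18 matrices of the two shapes [[ω^a, 0],[0, ω^b]] and [[0, ω^a],[ω^b, 0]] with a, b ∈ {0,1,2}, where ω = e^{2πi/3} is a primitive third root of unity. In particular Γ is a finite subgroup of GL₂(ℂ) of order 18. -/
open MvPolynomial

/-- Substitution of a 2×2 matrix into a polynomial in two variables:
`tᵢ ↦ gᵢ₁ t₁ + gᵢ₂ t₂`. -/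
noncomputable def bsub (g : Matrix (Fin 2) (Fin 2) ℂ) (p : MvPolynomial (Fin 2) ℂ) :
    MvPolynomial (Fin 2) ℂ :=
  aeval (fun i => C (g i 0) * X 0 + C (g i 1) * X 1) p

lemma bsub_one (p : MvPolynomial (Fin 2) ℂ) : bsub 1 p = p := by
  have : (fun i => C ((1 : Matrix (Fin 2) (Fin 2) ℂ) i 0) * X 0
      + C ((1 : Matrix (Fin 2) (Fin 2) ℂ) i 1) * X 1) = (X : Fin 2 → MvPolynomial (Fin 2) ℂ) := by
    funext i
    fin_cases i <;> simp [Matrix.one_apply]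
  rw [bsub, this, aeval_X_left_apply]

lemma bsub_mul (g h : Matrix (Fin 2) (Fin 2) ℂ) (p : MvPolynomial (Fin 2) ℂ) :
    bsub (g * h) p = bsub h (bsub g p) := by
  unfold bsub
  rw [← AlgHom.comp_apply]
  refine DFunLike.congr_fun ?_ p
  apply algHom_ext
  intro i
  simp [Matrix.mul_apply, Fin.sum_univ_two]
  ring

/-- The binary cubic `t₁³ + t₂³`. -/
noncomputable def cubicDiag : MvPolynomial (Fin 2) ℂ := X 0 ^ 3 + X 1 ^ 3

/-- The stabilizer `Γ` of the binary cubic `t₁³ + t₂³` in `GL₂(ℂ)`. -/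
noncomputable def Gamma : Subgroup (GL (Fin 2) ℂ) where
  carrier := {g | bsub (↑g) cubicDiag = cubicDiag}
  one_mem' := bsub_one _
  mul_mem' := by
    intro g h hg hh
    show bsub (↑(g * h)) cubicDiag = cubicDiag
    rw [Units.val_mul, bsub_mul, hg, hh]
  inv_mem' := by
    intro g hg
    show bsub (↑g⁻¹) cubicDiag = cubicDiag
    have hg' : bsub (↑g) cubicDiag = cubicDiag := hg
    have h1 : bsub ((↑g : Matrix (Fin 2) (Fin 2) ℂ) * (↑g⁻¹ : Matrix (Fin 2) (Fin 2) ℂ)) cubicDiag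
        = bsub (↑g⁻¹ : Matrix (Fin 2) (Fin 2) ℂ) cubicDiag := by
      rw [bsub_mul, hg']
    have h2 : (↑g : Matrix (Fin 2) (Fin 2) ℂ) * (↑g⁻¹ : Matrix (Fin 2) (Fin 2) ℂ) = 1 := by
      rw [← Units.val_mul, mul_inv_cancel, Units.val_one]
    rw [← h1, h2, bsub_one]

/-- A primitive third root of unity. -/
noncomputable def ω : ℂ := Complex.exp (2 * Real.pi * Complex.I / 3)

/-!
Write `g = [[a, b], [c, d]]`. Evaluating the invariance `(t₁³ + t₂³) ∘ g = t₁³ + t₂³` at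
`(1, 0)`, `(0, 1)` and `(1, ±1)` gives `a³ + c³ = b³ + d³ = 1` and `a²b + c²d = ab² + cd² = 0`.
Eliminating between the last two equations yields `ab · det g = 0` and `cd · det g = 0`, so `g`
is diagonal or antidiagonal, with cube roots of unity as its nonzero entries. Conversely these
18 matrices clearly preserve the form, and an infinite field detects polynomial identities by
evaluation.
-/

open Matrix

lemma eval_bsub (g : Matrix (Fin 2) (Fin 2) ℂ) (p : MvPolynomial (Fin 2) ℂ) (v : Fin 2 → ℂ) :
    eval v (bsub g p) = eval (g *ᵥ v) p := by
  rw [bsub, aeval_eq_bind₁]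
  conv_lhs => rw [← aeval_eq_eval, aeval_bind₁, aeval_eq_eval]
  congr 2
  funext i
  simp [mulVec, dotProduct, Fin.sum_univ_two]

lemma bsub_cubicDiag_eq_iff (g : Matrix (Fin 2) (Fin 2) ℂ) :
    bsub g cubicDiag = cubicDiag ↔
      ∀ x y : ℂ, (g 0 0 * x + g 0 1 * y) ^ 3 + (g 1 0 * x + g 1 1 * y) ^ 3 = x ^ 3 + y ^ 3 := by
  rw [MvPolynomial.funext_iff]
  refine ⟨fun h x y => ?_, fun h v => ?_⟩
  · simpa [eval_bsub, cubicDiag, mulVec, dotProduct, Fin.sum_univ_two] using h ![x, y]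
  · simpa [eval_bsub, cubicDiag, mulVec, dotProduct, Fin.sum_univ_two] using h (v 0) (v 1)

lemma cubic_coeffs_of_forall {K : Type*} [Field K] (h6 : (6 : K) ≠ 0) {a b c d : K}
    (h : ∀ x y : K, (a * x + b * y) ^ 3 + (c * x + d * y) ^ 3 = x ^ 3 + y ^ 3) :
    a ^ 3 + c ^ 3 = 1 ∧ b ^ 3 + d ^ 3 = 1 ∧
      a ^ 2 * b + c ^ 2 * d = 0 ∧ a * b ^ 2 + c * d ^ 2 = 0 := by
  have h10 := h 1 0
  have h01 := h 0 1
  have hp := h 1 1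
  have hm := h 1 (-1)
  refine ⟨by linear_combination h10, by linear_combination h01, ?_, ?_⟩
  · refine (mul_eq_zero.mp ?_).resolve_left h6
    linear_combination hp - hm - 2 * h01
  · refine (mul_eq_zero.mp ?_).resolve_left h6
    linear_combination hp + hm - 2 * h10

lemma eq_diag_or_antidiag_of_cubic_coeffs {R : Type*} [CommRing R] [IsDomain R] {a b c d : R}
    (hdet : a * d - b * c ≠ 0) (h1 : a ^ 3 + c ^ 3 = 1) (h2 : b ^ 3 + d ^ 3 = 1)
    (h3 : a ^ 2 * b + c ^ 2 * d = 0) (h4 : a * b ^ 2 + c * d ^ 2 = 0) :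
    (b = 0 ∧ c = 0 ∧ a ^ 3 = 1 ∧ d ^ 3 = 1) ∨ (a = 0 ∧ d = 0 ∧ b ^ 3 = 1 ∧ c ^ 3 = 1) := by
  have hab : a * b = 0 := by
    refine (mul_eq_zero.mp ?_).resolve_right hdet
    linear_combination d * h3 - c * h4
  have hcd : c * d = 0 := by
    refine (mul_eq_zero.mp ?_).resolve_right hdet
    linear_combination a * h4 - b * h3
  rcases mul_eq_zero.mp hab with rfl | rfl
  · have hc : c ≠ 0 := by rintro rfl; simp at hdet
    obtain rfl := (mul_eq_zero.mp hcd).resolve_left hc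
    exact .inr ⟨rfl, rfl, by linear_combination h2, by linear_combination h1⟩
  · have hd : d ≠ 0 := by rintro rfl; simp at hdet
    obtain rfl := (mul_eq_zero.mp hcd).resolve_right hd
    exact .inl ⟨rfl, rfl, by linear_combination h1, by linear_combination h2⟩

lemma isPrimitiveRoot_ω : IsPrimitiveRoot ω 3 := by
  simpa [ω] using Complex.isPrimitiveRoot_exp 3 (by norm_num)

lemma ω_ne_zero : ω ≠ 0 :=
  isPrimitiveRoot_ω.ne_zero (by norm_num)

lemma ω_pow_pow_three (a : ℕ) : (ω ^ a) ^ 3 = 1 := by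
  rw [← pow_mul, mul_comm, pow_mul, isPrimitiveRoot_ω.pow_eq_one, one_pow]

lemma exists_eq_ω_pow_of_pow_three_eq_one {x : ℂ} (hx : x ^ 3 = 1) :
    ∃ a : Fin 3, x = ω ^ (a : ℕ) := by
  obtain ⟨i, hi, rfl⟩ := isPrimitiveRoot_ω.eq_pow_of_pow_eq_one hx
  exact ⟨⟨i, hi⟩, rfl⟩

noncomputable def gammaMatrix : (Fin 3 × Fin 3) ⊕ (Fin 3 × Fin 3) → Matrix (Fin 2) (Fin 2) ℂ
  | .inl (a, b) => !![ω ^ (a : ℕ), 0; 0, ω ^ (b : ℕ)]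
  | .inr (a, b) => !![0, ω ^ (a : ℕ); ω ^ (b : ℕ), 0]

lemma mem_range_gammaMatrix_iff (M : Matrix (Fin 2) (Fin 2) ℂ) :
    M ∈ Set.range gammaMatrix ↔ ∃ a b : Fin 3,
      M = ![![ω ^ (a : ℕ), 0], ![0, ω ^ (b : ℕ)]] ∨
        M = ![![0, ω ^ (a : ℕ)], ![ω ^ (b : ℕ), 0]] := by
  constructor
  · rintro ⟨⟨a, b⟩ | ⟨a, b⟩, rfl⟩
    exacts [⟨a, b, .inl rfl⟩, ⟨a, b, .inr rfl⟩]
  · rintro ⟨a, b, rfl | rfl⟩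
    exacts [⟨.inl (a, b), rfl⟩, ⟨.inr (a, b), rfl⟩]

lemma gammaMatrix_injective : Function.Injective gammaMatrix := by
  have ω_pow_inj {a b : Fin 3} (h : ω ^ (a : ℕ) = ω ^ (b : ℕ)) : a = b :=
    Fin.ext (isPrimitiveRoot_ω.pow_inj a.isLt b.isLt h)
  rintro (⟨a, b⟩ | ⟨a, b⟩) (⟨a', b'⟩ | ⟨a', b'⟩) h <;>
    simp [gammaMatrix, ω_ne_zero] at h ⊢
  all_goals exact ⟨ω_pow_inj h.1, ω_pow_inj h.2⟩

lemma det_gammaMatrix_ne_zero (i : (Fin 3 × Fin 3) ⊕ (Fin 3 × Fin 3)) :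
    (gammaMatrix i).det ≠ 0 := by
  rcases i with ⟨a, b⟩ | ⟨a, b⟩ <;> rw [gammaMatrix, det_fin_two_of] <;> simp [ω_ne_zero]

lemma bsub_cubicDiag_eq_iff_mem_range {M : Matrix (Fin 2) (Fin 2) ℂ} (hM : M.det ≠ 0) :
    bsub M cubicDiag = cubicDiag ↔ M ∈ Set.range gammaMatrix := by
  rw [bsub_cubicDiag_eq_iff]
  constructor
  · intro h
    obtain ⟨h1, h2, h3, h4⟩ := cubic_coeffs_of_forall (by norm_num) h
    rw [det_fin_two] at hM
    rcases eq_diag_or_antidiag_of_cubic_coeffs hM h1 h2 h3 h4 with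
      ⟨hb, hc, ha3, hd3⟩ | ⟨ha, hd, hb3, hc3⟩
    · obtain ⟨a, ha⟩ := exists_eq_ω_pow_of_pow_three_eq_one ha3
      obtain ⟨b, hb⟩ := exists_eq_ω_pow_of_pow_three_eq_one hd3
      refine ⟨.inl (a, b), ?_⟩
      ext i j
      fin_cases i <;> fin_cases j <;> simp [gammaMatrix, *]
    · obtain ⟨a, ha⟩ := exists_eq_ω_pow_of_pow_three_eq_one hb3
      obtain ⟨b, hb⟩ := exists_eq_ω_pow_of_pow_three_eq_one hc3
      refine ⟨.inr (a, b), ?_⟩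
      ext i j
      fin_cases i <;> fin_cases j <;> simp [gammaMatrix, *]
  · rintro ⟨⟨a, b⟩ | ⟨a, b⟩, rfl⟩ x y <;>
      simp [gammaMatrix, mul_pow, ω_pow_pow_three, add_comm]

lemma mem_Gamma_iff (g : GL (Fin 2) ℂ) :
    g ∈ Gamma ↔ (g : Matrix (Fin 2) (Fin 2) ℂ) ∈ Set.range gammaMatrix :=
  bsub_cubicDiag_eq_iff_mem_range ((isUnit_iff_isUnit_det _).mp g.isUnit).ne_zero

lemma image_val_Gamma :
    ((↑) : GL (Fin 2) ℂ → Matrix (Fin 2) (Fin 2) ℂ) '' Gamma = Set.range gammaMatrix := by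
  ext M
  constructor
  · rintro ⟨g, hg, rfl⟩
    exact (mem_Gamma_iff g).mp hg
  · rintro ⟨i, rfl⟩
    let g := GeneralLinearGroup.mkOfDetNeZero _ (det_gammaMatrix_ne_zero i)
    exact ⟨g, (mem_Gamma_iff g).mpr ⟨i, rfl⟩, rfl⟩

lemma card_Gamma : Nat.card Gamma = 18 := by
  rw [← SetLike.coe_sort_coe, ← Nat.card_image_of_injective Units.val_injective, image_val_Gamma,
    Nat.card_range_of_injective gammaMatrix_injective]
  simp

/-- **The stabilizer of `t₁³ + t₂³`.** `Γ` consists exactly of the 18 matrices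
`[[ωᵃ, 0],[0, ωᵇ]]` and `[[0, ωᵃ],[ωᵇ, 0]]` with `a, b ∈ {0,1,2}`; in particular
it has order 18. -/
theorem gamma_description :
    (∀ g : GL (Fin 2) ℂ, g ∈ Gamma ↔
      ∃ a b : Fin 3,
        (↑g : Matrix (Fin 2) (Fin 2) ℂ) = ![![ω ^ (a : ℕ), 0], ![0, ω ^ (b : ℕ)]] ∨
        (↑g : Matrix (Fin 2) (Fin 2) ℂ) = ![![0, ω ^ (a : ℕ)], ![ω ^ (b : ℕ), 0]]) ∧
    Nat.card Gamma = 18 :=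
  ⟨fun g => (mem_Gamma_iff g).trans (mem_range_gammaMatrix_iff _), card_Gamma⟩
end

section
/- The group Γ is isomorphic to the semidirect product (ℤ/3 × ℤ/3) ⋊ ℤ/2, where the nontrivial element of ℤ/2 acts on ℤ/3 × ℤ/3 by swapping the two factors. -/
/-!
Write `g = !![a, b; c, d]`. Comparing the coefficients of `x³, y³, x²y, xy²` in
`(ax + by)³ + (cx + dy)³ = x³ + y³` gives `a³ + c³ = b³ + d³ = 1` and
`a²b + c²d = ab² + cd² = 0`; eliminating between the last two yields `abcd · det g = 0`,
so `g` is diagonal or antidiagonal with cube roots of unity as its nonzero entries.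
With `ω = exp(2πi/3)` and `S = !![0, 1; 1, 0]`, these are exactly the matrices
`diag(ωⁱ, ωʲ) · Sᵏ`, and `S · diag(u, v) · S⁻¹ = diag(v, u)`; so
`((i, j), k) ↦ diag(ωⁱ, ωʲ) · Sᵏ` is an isomorphism from the semidirect product onto `Γ`.
-/

open MvPolynomial

open Matrix

lemma mem_Gamma_iff_s2 (g : GL (Fin 2) ℂ) : g ∈ Gamma ↔ ∀ x y : ℂ,
    (g 0 0 * x + g 0 1 * y) ^ 3 + (g 1 0 * x + g 1 1 * y) ^ 3 = x ^ 3 + y ^ 3 := by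
  change bsub _ _ = _ ↔ _
  rw [MvPolynomial.funext_iff]
  simp [bsub, cubicDiag, Fin.forall_fin_succ_pi]

lemma eq_diagonal_or_antidiagonal_of_sum_cubes {K : Type*} [Field K] [CharZero K]
    {a b c d : K} (hdet : a * d - b * c ≠ 0)
    (h : ∀ x y : K, (a * x + b * y) ^ 3 + (c * x + d * y) ^ 3 = x ^ 3 + y ^ 3) :
    (b = 0 ∧ c = 0 ∧ a ^ 3 = 1 ∧ d ^ 3 = 1) ∨
      (a = 0 ∧ d = 0 ∧ b ^ 3 = 1 ∧ c ^ 3 = 1) := by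
  have h30 : a ^ 3 + c ^ 3 = 1 := by linear_combination h 1 0
  have h03 : b ^ 3 + d ^ 3 = 1 := by linear_combination h 0 1
  have h21 : a ^ 2 * b + c ^ 2 * d = 0 := by
    linear_combination (h 1 1 - h 1 (-1) - 2 * h 0 1) / 6
  have h12 : a * b ^ 2 + c * d ^ 2 = 0 := by
    linear_combination (h 1 1 + h 1 (-1) - 2 * h 1 0) / 6
  have habcd : a * b * c * d = 0 := by
    refine (mul_eq_zero.mp ?_).resolve_right hdet
    linear_combination c * d ^ 2 * h21 - c ^ 2 * d * h12
  -- e.g. if `a = 0` then `c³ = 1`, and `c²d = 0` forces `d = 0`; the other cases are symmetric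
  grind

section ZModPowHom

variable {M : Type*} [Monoid M] {n : ℕ} [NeZero n]

def zmodPowHom (g : M) (hg : g ^ n = 1) : Multiplicative (ZMod n) →* M where
  toFun s := g ^ s.toAdd.val
  map_one' := by simp
  map_mul' a b := by rw [toAdd_mul, ZMod.val_add, ← pow_eq_pow_mod _ hg, pow_add]

lemma zmodPowHom_ofAdd_one [Fact (1 < n)] (g : M) (hg : g ^ n = 1) :
    zmodPowHom g hg (.ofAdd 1) = g := by
  simp [zmodPowHom, ZMod.val_one]

lemma zmodPowHom_pow_eq_one (g : M) (hg : g ^ n = 1) (s : Multiplicative (ZMod n)) :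
    zmodPowHom g hg s ^ n = 1 := by
  rw [zmodPowHom, MonoidHom.coe_mk, OneHom.coe_mk, ← pow_mul, mul_comm, pow_mul, hg, one_pow]

lemma zmodPowHom_injective {M : Type*} [CommMonoid M] {ζ : M} (hζ : IsPrimitiveRoot ζ n) :
    Function.Injective (zmodPowHom ζ hζ.pow_eq_one) := by
  refine (injective_iff_map_eq_one _).mpr fun s hs => ?_
  have hval : s.toAdd.val = 0 :=
    Nat.eq_zero_of_dvd_of_lt (hζ.dvd_of_pow_eq_one _ hs) s.toAdd.val_lt
  rwa [ZMod.val_eq_zero, toAdd_eq_zero] at hval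

lemma exists_zmodPowHom_eq {R : Type*} [CommRing R] [IsDomain R] {ζ : R}
    (hζ : IsPrimitiveRoot ζ n) {z : R} (hz : z ^ n = 1) :
    ∃ s, zmodPowHom ζ hζ.pow_eq_one s = z := by
  obtain ⟨i, hi, rfl⟩ := hζ.eq_pow_of_pow_eq_one hz
  exact ⟨.ofAdd i, by simp [zmodPowHom, ZMod.val_cast_of_lt hi]⟩

end ZModPowHom

section TwoByTwo

variable {R : Type*} [CommRing R]

def diagHom : R × R →* Matrix (Fin 2) (Fin 2) R where
  toFun p := !![p.1, 0; 0, p.2]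
  map_one' := by simp [one_fin_two]
  map_mul' p q := by simp

def swapGL : GL (Fin 2) R :=
  ⟨!![0, 1; 1, 0], !![0, 1; 1, 0], by simp [one_fin_two], by simp [one_fin_two]⟩

lemma swapGL_sq : swapGL ^ 2 = (1 : GL (Fin 2) R) :=
  Units.ext (by simp [swapGL, sq, one_fin_two])

end TwoByTwo

lemma eq_one_or_eq_ofAdd_one (s : Multiplicative (ZMod 2)) : s = 1 ∨ s = .ofAdd 1 := by
  revert s; decide

abbrev C3 := Multiplicative (ZMod 3)

noncomputable def cubeRootChar : C3 →* ℂ :=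
  zmodPowHom _ (Complex.isPrimitiveRoot_exp 3 three_ne_zero).pow_eq_one

lemma cubeRootChar_injective : Function.Injective cubeRootChar :=
  zmodPowHom_injective (Complex.isPrimitiveRoot_exp 3 three_ne_zero)

lemma cubeRootChar_pow_three (s : C3) : cubeRootChar s ^ 3 = 1 :=
  zmodPowHom_pow_eq_one _ _ s

lemma exists_cubeRootChar_eq {z : ℂ} (hz : z ^ 3 = 1) : ∃ s, cubeRootChar s = z :=
  exists_zmodPowHom_eq (Complex.isPrimitiveRoot_exp 3 three_ne_zero) hz

noncomputable def diagGL : C3 × C3 →* GL (Fin 2) ℂ :=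
  (diagHom.comp (cubeRootChar.prodMap cubeRootChar)).toHomUnits

lemma coe_diagGL (x : C3 × C3) :
    (diagGL x : Matrix (Fin 2) (Fin 2) ℂ) = !![cubeRootChar x.1, 0; 0, cubeRootChar x.2] :=
  rfl

lemma diagGL_injective : Function.Injective diagGL := by
  intro x y hxy
  have h := congrArg (fun g : GL (Fin 2) ℂ => (g : Matrix (Fin 2) (Fin 2) ℂ)) hxy
  simp only [coe_diagGL] at h
  exact Prod.ext (cubeRootChar_injective (congrFun (congrFun h 0) 0))
    (cubeRootChar_injective (congrFun (congrFun h 1) 1))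

def swapAction (N : Type*) [Group N] : Multiplicative (ZMod 2) →* MulAut (N × N) :=
  zmodPowHom MulEquiv.prodComm (by ext <;> rfl)

def swapHom : Multiplicative (ZMod 2) →* GL (Fin 2) ℂ := zmodPowHom swapGL swapGL_sq

lemma diagGL_swapAction (s : Multiplicative (ZMod 2)) :
    diagGL.comp (swapAction C3 s).toMonoidHom =
      (MulAut.conj (swapHom s)).toMonoidHom.comp diagGL := by
  obtain rfl | rfl := eq_one_or_eq_ofAdd_one s
  · ext; simp
  · ext x i j
    fin_cases i <;> fin_cases j <;>
      simp [swapAction, swapHom, zmodPowHom_ofAdd_one, coe_diagGL, swapGL]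

noncomputable def gammaHom :
    (C3 × C3) ⋊[swapAction C3] Multiplicative (ZMod 2) →* GL (Fin 2) ℂ :=
  SemidirectProduct.lift diagGL swapHom diagGL_swapAction

lemma gammaHom_apply (x : (C3 × C3) ⋊[swapAction C3] Multiplicative (ZMod 2)) :
    gammaHom x = diagGL x.left * swapHom x.right :=
  rfl

lemma gammaHom_injective : Function.Injective gammaHom := by
  refine (injective_iff_map_eq_one _).mpr fun ⟨x, s⟩ hx => ?_
  obtain rfl | rfl := eq_one_or_eq_ofAdd_one s
  · have hx' : diagGL x = diagGL 1 := by simpa [gammaHom_apply] using hx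
    rw [diagGL_injective hx']
    rfl
  · have h00 := congrArg (fun g : GL (Fin 2) ℂ => (g : Matrix (Fin 2) (Fin 2) ℂ) 0 0) hx
    simp [gammaHom_apply, swapHom, zmodPowHom_ofAdd_one, coe_diagGL, swapGL] at h00

lemma diagGL_mem_Gamma (p : C3 × C3) : diagGL p ∈ Gamma := by
  refine (mem_Gamma_iff_s2 _).mpr fun x y => ?_
  simp only [coe_diagGL, of_apply, cons_val', cons_val_zero, cons_val_one, empty_val',
    cons_val_fin_one]
  linear_combination x ^ 3 * cubeRootChar_pow_three p.1 + y ^ 3 * cubeRootChar_pow_three p.2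

lemma swapGL_mem_Gamma : swapGL ∈ Gamma :=
  (mem_Gamma_iff_s2 _).mpr fun x y => by simp [swapGL, add_comm]

lemma range_gammaHom : gammaHom.range = Gamma := by
  refine le_antisymm ?_ fun g hg => ?_
  · rintro _ ⟨⟨p, s⟩, rfl⟩
    exact Gamma.mul_mem (diagGL_mem_Gamma p) (Gamma.pow_mem swapGL_mem_Gamma _)
  have hdet : g 0 0 * g 1 1 - g 0 1 * g 1 0 ≠ 0 := by
    rw [← det_fin_two]; exact g.det_ne_zero
  rcases eq_diagonal_or_antidiagonal_of_sum_cubes hdet ((mem_Gamma_iff_s2 g).mp hg) with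
    ⟨hb, hc, ha, hd⟩ | ⟨ha, hd, hb, hc⟩
  · obtain ⟨i, hi⟩ := exists_cubeRootChar_eq ha
    obtain ⟨j, hj⟩ := exists_cubeRootChar_eq hd
    refine ⟨⟨(i, j), 1⟩, Units.ext ?_⟩
    rw [eta_fin_two (g : Matrix (Fin 2) (Fin 2) ℂ)]
    simp [gammaHom_apply, coe_diagGL, hi, hj, hb, hc]
  · obtain ⟨i, hi⟩ := exists_cubeRootChar_eq hb
    obtain ⟨j, hj⟩ := exists_cubeRootChar_eq hc
    refine ⟨⟨(i, j), .ofAdd 1⟩, Units.ext ?_⟩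
    rw [eta_fin_two (g : Matrix (Fin 2) (Fin 2) ℂ)]
    simp [gammaHom_apply, coe_diagGL, swapHom, zmodPowHom_ofAdd_one, swapGL,
      hi, hj, ha, hd]

/-- **`Γ ≅ (ℤ/3 × ℤ/3) ⋊ ℤ/2`** where the nontrivial element of `ℤ/2` acts by
swapping the two factors. -/
theorem gamma_semidirect_product :
    ∃ φ : Multiplicative (ZMod 2) →*
        MulAut (Multiplicative (ZMod 3) × Multiplicative (ZMod 3)),
      φ (Multiplicative.ofAdd 1) = MulEquiv.prodComm ∧
      Nonempty (Gamma ≃*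
        SemidirectProduct (Multiplicative (ZMod 3) × Multiplicative (ZMod 3))
          (Multiplicative (ZMod 2)) φ) :=
  ⟨swapAction _, zmodPowHom_ofAdd_one _ _,
    ⟨(MulEquiv.subgroupCongr range_gammaHom).symm.trans
      (MonoidHom.ofInjective gammaHom_injective).symm⟩⟩
end

section
/- For every g ∈ Γ one has (t₁t₂)∘g = det(g)⁴ · (t₁t₂). (This is the concrete content of the fact that the restriction to Γ of Sym²T ⊗ (det T)⁻¹ contains the restriction of det(T)³ as a 1-dimensional summand.) -/
/-!
Comparing coefficients of `(a t₁ + b t₂)³ + (c t₁ + d t₂)³ = t₁³ + t₂³` gives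
`a³ + c³ = b³ + d³ = 1` and `a²b + c²d = ab² + cd² = 0`; hence `ab · det g = 0`, so an element of
`Γ` is diagonal or antidiagonal with cube roots of unity as entries. Then `t₁t₂` is sent to
`ad · t₁t₂` resp. `bc · t₁t₂`, and `ad = (ad)⁴`, `bc = (-bc)⁴` because `a³ = d³ = 1` resp.
`b³ = c³ = 1`.
-/

open MvPolynomial

lemma bsub_X_zero_mul_X_one (M : Matrix (Fin 2) (Fin 2) ℂ) :
    bsub M (X 0 * X 1) =
      (C (M 0 0) * X 0 + C (M 0 1) * X 1) * (C (M 1 0) * X 0 + C (M 1 1) * X 1) := by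
  simp [bsub]

lemma cube_add_cube_of_mem_Gamma {g : GL (Fin 2) ℂ} (hg : g ∈ Gamma) (x y : ℂ) :
    (g 0 0 * x + g 0 1 * y) ^ 3 + (g 1 0 * x + g 1 1 * y) ^ 3 = x ^ 3 + y ^ 3 := by
  simpa [bsub, cubicDiag] using congrArg (eval ![x, y]) hg

lemma coeff_eqs_of_forall_cube_add_cube_eq {K : Type*} [Field K] [CharZero K] {a b c d : K}
    (h : ∀ x y : K, (a * x + b * y) ^ 3 + (c * x + d * y) ^ 3 = x ^ 3 + y ^ 3) :
    a ^ 3 + c ^ 3 = 1 ∧ b ^ 3 + d ^ 3 = 1 ∧ a ^ 2 * b + c ^ 2 * d = 0 ∧ a * b ^ 2 + c * d ^ 2 = 0 :=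
  ⟨by linear_combination h 1 0, by linear_combination h 0 1,
    by linear_combination h 1 1 / 6 - h 1 (-1) / 6 - h 0 1 / 3,
    by linear_combination h 1 1 / 6 + h 1 (-1) / 6 - h 1 0 / 3⟩

lemma diagonal_or_antidiagonal_of_coeff_eqs {R : Type*} [CommRing R] [IsDomain R] {a b c d : R}
    (hdet : a * d - b * c ≠ 0)
    (h₁ : a ^ 3 + c ^ 3 = 1) (h₂ : b ^ 3 + d ^ 3 = 1)
    (h₃ : a ^ 2 * b + c ^ 2 * d = 0) (h₄ : a * b ^ 2 + c * d ^ 2 = 0) :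
    (b = 0 ∧ c = 0 ∧ a ^ 3 = 1 ∧ d ^ 3 = 1) ∨ (a = 0 ∧ d = 0 ∧ b ^ 3 = 1 ∧ c ^ 3 = 1) := by
  have hab : a * b * (a * d - b * c) = 0 := by linear_combination d * h₃ - c * h₄
  rcases mul_eq_zero.mp ((mul_eq_zero.mp hab).resolve_right hdet) with ha | hb
  · have hc : c ^ 3 = 1 := by linear_combination h₁ - a ^ 2 * ha
    have hd : d = 0 := by
      have hc2d : c ^ 2 * d = 0 := by linear_combination h₃ - a * b * ha
      refine (mul_eq_zero.mp hc2d).resolve_left fun hc2 => ?_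
      simp [(pow_eq_zero_iff two_ne_zero).mp hc2] at hc
    exact Or.inr ⟨ha, hd, by linear_combination h₂ - d ^ 2 * hd, hc⟩
  · have hd : d ^ 3 = 1 := by linear_combination h₂ - b ^ 2 * hb
    have hc : c = 0 := by
      have hcd2 : c * d ^ 2 = 0 := by linear_combination h₄ - a * b * hb
      refine (mul_eq_zero.mp hcd2).resolve_right fun hd2 => ?_
      simp [(pow_eq_zero_iff two_ne_zero).mp hd2] at hd
    exact Or.inl ⟨hb, hc, by linear_combination h₁ - c ^ 2 * hc, hd⟩

/-- For every `g ∈ Γ`, the substitution action of `g` on `t₁t₂` is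
multiplication by `det(g)⁴`. -/
theorem gamma_acts_on_t1t2 :
    ∀ g : GL (Fin 2) ℂ, g ∈ Gamma →
      bsub (↑g) (X 0 * X 1) =
        C ((↑g : Matrix (Fin 2) (Fin 2) ℂ).det ^ 4) * (X 0 * X 1) := by
  intro g hg
  have hdet : (g : Matrix (Fin 2) (Fin 2) ℂ).det ≠ 0 := g.isUnit.map Matrix.detMonoidHom |>.ne_zero
  rw [Matrix.det_fin_two] at hdet ⊢
  obtain ⟨h₁, h₂, h₃, h₄⟩ := coeff_eqs_of_forall_cube_add_cube_eq (cube_add_cube_of_mem_Gamma hg)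
  rw [bsub_X_zero_mul_X_one]
  rcases diagonal_or_antidiagonal_of_coeff_eqs hdet h₁ h₂ h₃ h₄ with
    ⟨hb, hc, ha, hd⟩ | ⟨ha, hd, hb, hc⟩
  · rw [hb, hc, show (g 0 0 * g 1 1 - 0 * 0 : ℂ) ^ 4 = g 0 0 * g 1 1 by
      linear_combination g 0 0 * g 1 1 * (g 0 0 ^ 3 * hd + ha)]
    simp only [C_0, C_mul]
    ring
  · rw [ha, hd, show (0 * 0 - g 0 1 * g 1 0 : ℂ) ^ 4 = g 0 1 * g 1 0 by
      linear_combination g 0 1 * g 1 0 * (g 0 1 ^ 3 * hc + hb)]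
    simp only [C_0, C_mul]
    ring
end

section
/- Let f ∈ ℂ[x₁,…,x₆] be homogeneous of degree 3 such that the only common zero in ℂ⁶ of its partial derivatives is the origin, let f̂ be the unique symmetric trilinear form on ℂ⁶ with f̂(x,x,x) = f(x), and let W be the polynomial in the 16 variables (Φ₁ ∈ ℂ⁶, Φ₂ ∈ ℂ⁶, a₀,a₁,a₂,a₃ ∈ ℂ) given by W = Σ_{j=0}^{3} aⱼ · f̂(Φ₁,…,Φ₁,Φ₂,…,Φ₂) with 3−j arguments equal to Φ₁ and j arguments equal to Φ₂. If all 16 partial derivatives of W vanish at a point (Φ₁,Φ₂,a) and the vectors Φ₁, Φ₂ are linearly independent, then a₀ = a₁ = a₂ = a₃ = 0 and f(sΦ₁ + tΦ₂) = 0 for all s,t ∈ ℂ. (Hence on X₋ the critical locus of the superpotential W lies along the Fano variety of lines F_Y ⊂ Gr(2,6) ⊂ X₋.) -/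
/-!
The equations `∂W/∂aⱼ = 0` say that `f̂` vanishes on all triples taken from `{Φ₁, Φ₂}`, so `f`
vanishes on their span. Writing `ψ = Σ aⱼ t₁^(3-j) t₂^j`, the equations `∂W/∂Φ₁ = ∂W/∂Φ₂ = 0`
say that the binary quadratics `∂ψ/∂t₁ = 3a₀t₁² + 2a₁t₁t₂ + a₂t₂²` and
`∂ψ/∂t₂ = a₁t₁² + 2a₂t₁t₂ + 3a₃t₂²` lie in the space of relations `α t₁² + β t₁t₂ + γ t₂²` with
`α f̂(·,Φ₁,Φ₁) + β f̂(·,Φ₁,Φ₂) + γ f̂(·,Φ₂,Φ₂) = 0`. A nonzero square `(s t₁ + t t₂)²` among them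
would make `∇f` vanish at `sΦ₁ + tΦ₂ ≠ 0`, contradicting smoothness. Over `ℂ` every pencil of
binary quadratics contains a nonzero square (the discriminant along the pencil is itself a binary
quadratic form), so the two partials of `ψ` are proportional; then `ψ` is a cube, `∂ψ/∂t₁` is a
square, and all `aⱼ` vanish.
-/

open MvPolynomial

namespace MvPolynomial

variable {σ R : Type*} [CommRing R]

noncomputable def restrictLine (p : MvPolynomial σ R) (x d : σ → R) : Polynomial R :=
  aeval (fun v => Polynomial.C (x v) + Polynomial.C (d v) * Polynomial.X) p

theorem eval_restrictLine (p : MvPolynomial σ R) (x d : σ → R) (t : R) :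
    (p.restrictLine x d).eval t = eval (x + t • d) p := by
  induction p using MvPolynomial.induction_on with
  | C a => simp [restrictLine]
  | add p q hp hq => simp_all [restrictLine]
  | mul_X p n hp =>
    simp only [restrictLine, map_mul, aeval_X, Polynomial.eval_mul] at hp ⊢
    simp only [hp, Polynomial.eval_add, Polynomial.eval_mul, Polynomial.eval_C, Polynomial.eval_X,
      eval_X, Pi.add_apply, Pi.smul_apply, smul_eq_mul]
    ring

theorem coeff_one_restrictLine [Fintype σ] [DecidableEq σ] (p : MvPolynomial σ R) (x d : σ → R) :
    (p.restrictLine x d).coeff 1 = ∑ v, d v * eval x (pderiv v p) := by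
  induction p using MvPolynomial.induction_on with
  | C a => simp [restrictLine]
  | add p q hp hq => simp_all [restrictLine, mul_add, Finset.sum_add_distrib]
  | mul_X p n hp =>
    have h0 : (p.restrictLine x d).coeff 0 = eval x p := by
      rw [Polynomial.coeff_zero_eq_eval_zero, eval_restrictLine, zero_smul, add_zero]
    simp only [restrictLine, map_mul, aeval_X] at hp h0 ⊢
    simp only [mul_add, Polynomial.coeff_add, ← mul_assoc, Polynomial.coeff_mul_X,
      Polynomial.coeff_mul_C, hp, h0, Derivation.leibniz, pderiv_X, Pi.single_apply, smul_eq_mul,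
      map_add, map_mul, eval_X, apply_ite (eval x), map_zero, mul_ite, mul_zero, mul_one,
      Finset.sum_add_distrib, Finset.sum_ite_eq, Finset.mem_univ, if_true, Finset.sum_mul]
    rw [add_comm]
    congr 1
    · ring
    · exact Finset.sum_congr rfl fun _ _ => by ring

theorem sum_mul_eval_pderiv_eq_coeff_one [Fintype σ] [DecidableEq σ] [IsDomain R] [Infinite R]
    (p : MvPolynomial σ R) (x d : σ → R) (q : Polynomial R)
    (h : ∀ t, eval (x + t • d) p = q.eval t) :
    ∑ v, d v * eval x (pderiv v p) = q.coeff 1 := by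
  rw [← coeff_one_restrictLine, Polynomial.funext fun t => (eval_restrictLine p x d t).trans (h t)]

end MvPolynomial

structure IsSymmTrilinear {K V : Type*} [CommRing K] [AddCommGroup V] [Module K V]
    (F : V → V → V → K) : Prop where
  swap₁₂ : ∀ x y z, F x y z = F y x z
  swap₂₃ : ∀ x y z, F x y z = F x z y
  add_left : ∀ x x' y z, F (x + x') y z = F x y z + F x' y z
  smul_left : ∀ (c : K) x y z, F (c • x) y z = c * F x y z

noncomputable def trilinearRestrictLine {K V : Type*} [CommRing K] (F : V → V → V → K)
    (x y z u v w : V) : Polynomial K :=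
  Polynomial.C (F x y z) + Polynomial.C (F u y z + F x v z + F x y w) * Polynomial.X
    + Polynomial.C (F u v z + F u y w + F x v w) * Polynomial.X ^ 2
    + Polynomial.C (F u v w) * Polynomial.X ^ 3

theorem coeff_zero_trilinearRestrictLine {K V : Type*} [CommRing K] (F : V → V → V → K)
    (x y z u v w : V) : (trilinearRestrictLine F x y z u v w).coeff 0 = F x y z := by
  simp [trilinearRestrictLine]

namespace IsSymmTrilinear

variable {K V : Type*} [CommRing K] [AddCommGroup V] [Module K V] {F : V → V → V → K}

theorem swap₁₃ (hF : IsSymmTrilinear F) (x y z : V) : F x y z = F z y x := by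
  rw [hF.swap₂₃, hF.swap₁₂, hF.swap₂₃]

theorem add_mid (hF : IsSymmTrilinear F) (x y y' z : V) :
    F x (y + y') z = F x y z + F x y' z := by
  rw [hF.swap₁₂, hF.add_left, hF.swap₁₂ y, hF.swap₁₂ y']

theorem add_right (hF : IsSymmTrilinear F) (x y z z' : V) :
    F x y (z + z') = F x y z + F x y z' := by
  rw [hF.swap₁₃, hF.add_left, hF.swap₁₃ z, hF.swap₁₃ z']

theorem smul_mid (hF : IsSymmTrilinear F) (c : K) (x y z : V) : F x (c • y) z = c * F x y z := by
  rw [hF.swap₁₂, hF.smul_left, hF.swap₁₂ y]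

theorem smul_right (hF : IsSymmTrilinear F) (c : K) (x y z : V) : F x y (c • z) = c * F x y z := by
  rw [hF.swap₁₃, hF.smul_left, hF.swap₁₃ z]

theorem zero_left (hF : IsSymmTrilinear F) (y z : V) : F 0 y z = 0 := by
  simpa using hF.smul_left 0 0 y z

theorem eval_trilinearRestrictLine (hF : IsSymmTrilinear F) (x y z u v w : V) (t : K) :
    (trilinearRestrictLine F x y z u v w).eval t = F (x + t • u) (y + t • v) (z + t • w) := by
  simp only [trilinearRestrictLine, Polynomial.eval_add, Polynomial.eval_mul, Polynomial.eval_C,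
    Polynomial.eval_X, Polynomial.eval_pow, hF.add_left, hF.add_mid, hF.add_right, hF.smul_left,
    hF.smul_mid, hF.smul_right]
  ring

theorem coeff_one_trilinearRestrictLine (hF : IsSymmTrilinear F) (x y z u v w : V) :
    (trilinearRestrictLine F x y z u v w).coeff 1 = F u y z + F v x z + F w x y := by
  simp only [trilinearRestrictLine, Polynomial.coeff_add, Polynomial.coeff_C_mul_X,
    Polynomial.coeff_C_mul_X_pow, Polynomial.coeff_C]
  simp [hF.swap₁₂ x v, hF.swap₁₃ x y w, hF.swap₂₃ w y x]

theorem apply_smul_add_smul_self (hF : IsSymmTrilinear F) (u x y : V) (s t : K) :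
    F u (s • x + t • y) (s • x + t • y) =
      s ^ 2 * F u x x + 2 * s * t * F u x y + t ^ 2 * F u y y := by
  simp only [hF.add_mid, hF.add_right, hF.smul_mid, hF.smul_right, hF.swap₂₃ u y x]
  ring

theorem apply_smul_add_smul_cube (hF : IsSymmTrilinear F) (x y : V) (s t : K) :
    F (s • x + t • y) (s • x + t • y) (s • x + t • y) =
      s ^ 3 * F x x x + 3 * s ^ 2 * t * F x x y + 3 * s * t ^ 2 * F x y y + t ^ 3 * F y y y := by
  rw [hF.add_left, hF.smul_left, hF.smul_left, hF.apply_smul_add_smul_self,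
    hF.apply_smul_add_smul_self, hF.swap₁₂ y x x, hF.swap₂₃ x y x, hF.swap₁₂ y x y]
  ring

end IsSymmTrilinear

theorem IsSymmTrilinear.eval_pderiv_eq {K ι : Type*} [CommRing K] [IsDomain K] [Infinite K]
    [Fintype ι] [DecidableEq ι] {F : (ι → K) → (ι → K) → (ι → K) → K} (hF : IsSymmTrilinear F)
    {f : MvPolynomial ι K} (hdiag : ∀ x, F x x x = eval x f) (x : ι → K) (i : ι) :
    eval x (pderiv i f) = 3 * F (Pi.single i 1) x x := by
  have h := sum_mul_eval_pderiv_eq_coeff_one f x (Pi.single i 1)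
    (trilinearRestrictLine F x x x (Pi.single i 1) (Pi.single i 1) (Pi.single i 1))
    fun t => by rw [hF.eval_trilinearRestrictLine, hdiag]
  rw [hF.coeff_one_trilinearRestrictLine] at h
  simp only [Pi.single_apply, ite_mul, one_mul, zero_mul, Finset.sum_ite_eq', Finset.mem_univ,
    if_true] at h
  linear_combination h

theorem IsSymmTrilinear.eq_zero_of_forall_apply_eq_zero {K ι : Type*} [CommRing K] [IsDomain K]
    [Infinite K] [Fintype ι] [DecidableEq ι] {F : (ι → K) → (ι → K) → (ι → K) → K}
    (hF : IsSymmTrilinear F) {f : MvPolynomial ι K} (hdiag : ∀ x, F x x x = eval x f)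
    (hsm : ∀ x : ι → K, (∀ i, eval x (pderiv i f) = 0) → x = 0) {x : ι → K}
    (h : ∀ u, F u x x = 0) : x = 0 :=
  hsm x fun i => by rw [hF.eval_pderiv_eq hdiag, h, mul_zero]

theorem exists_sq_of_discrim_eq_zero {K : Type*} [Field K] [IsAlgClosed K] [NeZero (2 : K)]
    {α β γ : K} (h : discrim α β γ = 0) : ∃ s t, α = s ^ 2 ∧ β = 2 * s * t ∧ γ = t ^ 2 := by
  obtain ⟨s, rfl⟩ := IsAlgClosed.exists_pow_nat_eq α (n := 2) (by norm_num)
  rcases eq_or_ne s 0 with rfl | hs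
  · obtain ⟨t, rfl⟩ := IsAlgClosed.exists_pow_nat_eq γ (n := 2) (by norm_num)
    refine ⟨0, t, by ring, ?_, rfl⟩
    simpa [discrim] using h
  · refine ⟨s, β / (2 * s), rfl, by field_simp, ?_⟩
    rw [discrim] at h
    field_simp
    linear_combination -h

theorem exists_ne_zero_binaryQuadratic_eq_zero {K : Type*} [Field K] [IsAlgClosed K]
    [NeZero (2 : K)] (A B C : K) :
    ∃ c₁ c₂ : K, (c₁, c₂) ≠ 0 ∧ A * c₁ ^ 2 + B * c₁ * c₂ + C * c₂ ^ 2 = 0 := by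
  rcases eq_or_ne A 0 with rfl | hA
  · exact ⟨1, 0, by simp, by ring⟩
  · obtain ⟨c, hc⟩ :=
      exists_quadratic_eq_zero (b := B) (c := C) hA (IsAlgClosed.exists_eq_mul_self _)
    exact ⟨c, 1, by simp, by linear_combination hc⟩

section BinaryCubic

variable {K ι : Type*} [Field K] [IsAlgClosed K] [CharZero K] {g₁ g₂ g₃ : ι → K}

theorem eq_zero_of_relation_of_discrim_eq_zero
    (hsq : ∀ s t : K, (∀ u, s ^ 2 * g₁ u + 2 * s * t * g₂ u + t ^ 2 * g₃ u = 0) → s = 0 ∧ t = 0)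
    {α β γ : K} (hrel : ∀ u, α * g₁ u + β * g₂ u + γ * g₃ u = 0) (hdisc : discrim α β γ = 0) :
    α = 0 ∧ β = 0 ∧ γ = 0 := by
  obtain ⟨s, t, rfl, rfl, rfl⟩ := exists_sq_of_discrim_eq_zero hdisc
  obtain ⟨rfl, rfl⟩ := hsq s t hrel
  simp

theorem binaryCubic_eq_zero_of_partials
    (hsq : ∀ s t : K, (∀ u, s ^ 2 * g₁ u + 2 * s * t * g₂ u + t ^ 2 * g₃ u = 0) → s = 0 ∧ t = 0)
    {a : Fin 4 → K} (h₁ : ∀ u, 3 * a 0 * g₁ u + 2 * a 1 * g₂ u + a 2 * g₃ u = 0)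
    (h₂ : ∀ u, a 1 * g₁ u + 2 * a 2 * g₂ u + 3 * a 3 * g₃ u = 0) : a = 0 := by
  -- the discriminant of `c₁ • (3a₀, 2a₁, a₂) + c₂ • (a₁, 2a₂, 3a₃)` as a quadratic form in `c₁, c₂`
  obtain ⟨c₁, c₂, hc, hdisc⟩ := exists_ne_zero_binaryQuadratic_eq_zero
    (discrim (3 * a 0) (2 * a 1) (a 2))
    (2 * (2 * a 1) * (2 * a 2) - 4 * (3 * a 0 * (3 * a 3) + a 1 * a 2))
    (discrim (a 1) (2 * a 2) (3 * a 3))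
  obtain ⟨e₀, e₁, e₂⟩ := eq_zero_of_relation_of_discrim_eq_zero hsq
    (α := c₁ * (3 * a 0) + c₂ * a 1) (β := c₁ * (2 * a 1) + c₂ * (2 * a 2))
    (γ := c₁ * a 2 + c₂ * (3 * a 3)) (fun u => by linear_combination c₁ * h₁ u + c₂ * h₂ u)
    (by simp only [discrim] at hdisc ⊢; linear_combination hdisc)
  have h012 : a 0 = 0 ∧ a 1 = 0 ∧ a 2 = 0 := by
    rcases eq_or_ne c₂ 0 with rfl | hc₂
    · have hc₁ : c₁ ≠ 0 := by rintro rfl; exact hc rfl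
      exact ⟨by simpa [hc₁] using e₀, by simpa [hc₁] using e₁, by simpa [hc₁] using e₂⟩
    · have hdisc₁ : discrim (3 * a 0) (2 * a 1) (a 2) = 0 := by
        refine (mul_eq_zero.mp ?_).resolve_left (pow_ne_zero 2 hc₂)
        rw [discrim]
        linear_combination 4 * c₂ * a 1 * e₀ - 6 * c₂ * a 0 * e₁
      obtain ⟨h0, h1, h2⟩ := eq_zero_of_relation_of_discrim_eq_zero hsq h₁ hdisc₁
      exact ⟨by simpa using h0, by simpa using h1, h2⟩
  obtain ⟨h0, h1, h2⟩ := h012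
  obtain ⟨-, -, h3⟩ := eq_zero_of_relation_of_discrim_eq_zero hsq (α := 0) (β := 0)
    (γ := 3 * a 3) (fun u => by simpa [h1, h2] using h₂ u) (by simp [discrim])
  ext j
  fin_cases j
  exacts [h0, h1, h2, by simpa using h3]

end BinaryCubic

def IsSuperpotential {K ι : Type*} [CommRing K] (F : (ι → K) → (ι → K) → (ι → K) → K)
    (W : MvPolynomial ((ι ⊕ ι) ⊕ Fin 4) K) : Prop :=
  ∀ (P₁ P₂ : ι → K) (b : Fin 4 → K), eval (Sum.elim (Sum.elim P₁ P₂) b) W =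
    b 0 * F P₁ P₁ P₁ + b 1 * F P₁ P₁ P₂ + b 2 * F P₁ P₂ P₂ + b 3 * F P₂ P₂ P₂

theorem IsSuperpotential.differential_eq_zero {K ι : Type*} [CommRing K] [IsDomain K]
    [Infinite K] [Fintype ι] [DecidableEq ι] {F : (ι → K) → (ι → K) → (ι → K) → K}
    {W : MvPolynomial ((ι ⊕ ι) ⊕ Fin 4) K} (hW : IsSuperpotential F W) (hF : IsSymmTrilinear F)
    {Φ₁ Φ₂ : ι → K} {a : Fin 4 → K}
    (hcrit : ∀ i, eval (Sum.elim (Sum.elim Φ₁ Φ₂) a) (pderiv i W) = 0)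
    (u v : ι → K) (b : Fin 4 → K) :
    b 0 * F Φ₁ Φ₁ Φ₁ + b 1 * F Φ₁ Φ₁ Φ₂ + b 2 * F Φ₁ Φ₂ Φ₂ + b 3 * F Φ₂ Φ₂ Φ₂
      + (3 * a 0 * F u Φ₁ Φ₁ + 2 * a 1 * F u Φ₁ Φ₂ + a 2 * F u Φ₂ Φ₂)
      + (a 1 * F v Φ₁ Φ₁ + 2 * a 2 * F v Φ₁ Φ₂ + 3 * a 3 * F v Φ₂ Φ₂) = 0 := by
  let ℓ : Fin 4 → Polynomial K := fun j =>
    Polynomial.C (a j) + Polynomial.C (b j) * Polynomial.X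
  have key := sum_mul_eval_pderiv_eq_coeff_one W (Sum.elim (Sum.elim Φ₁ Φ₂) a)
    (Sum.elim (Sum.elim u v) b)
    (ℓ 0 * trilinearRestrictLine F Φ₁ Φ₁ Φ₁ u u u
      + ℓ 1 * trilinearRestrictLine F Φ₁ Φ₁ Φ₂ u u v
      + ℓ 2 * trilinearRestrictLine F Φ₁ Φ₂ Φ₂ u v v
      + ℓ 3 * trilinearRestrictLine F Φ₂ Φ₂ Φ₂ v v v) fun t => by
    have hline : Sum.elim (Sum.elim Φ₁ Φ₂) a + t • Sum.elim (Sum.elim u v) b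
        = Sum.elim (Sum.elim (Φ₁ + t • u) (Φ₂ + t • v)) (a + t • b) := by
      funext i; rcases i with (i | i) | i <;> rfl
    rw [hline, hW]
    simp only [ℓ, Polynomial.eval_add, Polynomial.eval_mul, Polynomial.eval_C, Polynomial.eval_X,
      hF.eval_trilinearRestrictLine, Pi.add_apply, Pi.smul_apply, smul_eq_mul]
    ring
  simp only [hcrit, mul_zero, Finset.sum_const_zero] at key
  simp only [ℓ, add_mul, mul_assoc, Polynomial.coeff_add, Polynomial.coeff_C_mul,
    Polynomial.coeff_X_mul, hF.coeff_one_trilinearRestrictLine,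
    coeff_zero_trilinearRestrictLine] at key
  linear_combination -key

theorem critical_locus_on_X_minus_general
    (f : MvPolynomial (Fin 6) ℂ)
    (hsm : ∀ x : Fin 6 → ℂ, (∀ i, eval x (pderiv i f) = 0) → x = 0)
    (F : (Fin 6 → ℂ) → (Fin 6 → ℂ) → (Fin 6 → ℂ) → ℂ)
    (hF_swap12 : ∀ x y z, F x y z = F y x z)
    (hF_swap23 : ∀ x y z, F x y z = F x z y)
    (hF_add : ∀ x x' y z, F (x + x') y z = F x y z + F x' y z)
    (hF_smul : ∀ (c : ℂ) (x y z : Fin 6 → ℂ), F (c • x) y z = c * F x y z)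
    (hF_diag : ∀ x, F x x x = eval x f)
    (W : MvPolynomial ((Fin 6 ⊕ Fin 6) ⊕ Fin 4) ℂ)
    (hW : ∀ (P₁ P₂ : Fin 6 → ℂ) (b : Fin 4 → ℂ),
      eval (Sum.elim (Sum.elim P₁ P₂) b) W =
        b 0 * F P₁ P₁ P₁ + b 1 * F P₁ P₁ P₂ + b 2 * F P₁ P₂ P₂ + b 3 * F P₂ P₂ P₂)
    (Φ₁ Φ₂ : Fin 6 → ℂ) (a : Fin 4 → ℂ)
    (hcrit : ∀ v, eval (Sum.elim (Sum.elim Φ₁ Φ₂) a) (pderiv v W) = 0)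
    (hind : LinearIndependent ℂ ![Φ₁, Φ₂]) :
    (∀ j, a j = 0) ∧ ∀ s t : ℂ, eval (s • Φ₁ + t • Φ₂) f = 0 := by
  have hF : IsSymmTrilinear F := ⟨hF_swap12, hF_swap23, hF_add, hF_smul⟩
  have hdW := IsSuperpotential.differential_eq_zero hW hF hcrit
  have hsq : ∀ s t : ℂ,
      (∀ u, s ^ 2 * F u Φ₁ Φ₁ + 2 * s * t * F u Φ₁ Φ₂ + t ^ 2 * F u Φ₂ Φ₂ = 0) → s = 0 ∧ t = 0 :=
    fun s t h => LinearIndependent.pair_iff.mp hind s t <|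
      hF.eq_zero_of_forall_apply_eq_zero hF_diag hsm fun u => by
        rw [hF.apply_smul_add_smul_self]; exact h u
  have ha : a = 0 := binaryCubic_eq_zero_of_partials hsq
    (fun u => by simpa [hF.zero_left] using hdW u 0 0)
    (fun u => by simpa [hF.zero_left] using hdW 0 u 0)
  have hvanish : ∀ b : Fin 4 → ℂ,
      b 0 * F Φ₁ Φ₁ Φ₁ + b 1 * F Φ₁ Φ₁ Φ₂ + b 2 * F Φ₁ Φ₂ Φ₂ + b 3 * F Φ₂ Φ₂ Φ₂ = 0 :=
    fun b => by simpa [hF.zero_left] using hdW 0 0 b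
  refine ⟨fun j => congrFun ha j, fun s t => ?_⟩
  rw [← hF_diag, hF.apply_smul_add_smul_cube]
  exact hvanish ![s ^ 3, 3 * s ^ 2 * t, 3 * s * t ^ 2, t ^ 3]

/-- **Critical locus of the superpotential on `X₋`.** Let `f` be a homogeneous
cubic in six variables whose partials have no common zero but the origin, `F` its
polarization, and `W = Σⱼ aⱼ F(Φ₁,…,Φ₁,Φ₂,…,Φ₂)`. If all 16 partial derivatives
of `W` vanish at `(Φ₁, Φ₂, a)` and `Φ₁, Φ₂` are linearly independent, then
`a = 0` and `f` vanishes on the plane spanned by `Φ₁, Φ₂`. -/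
theorem critical_locus_on_X_minus
    (f : MvPolynomial (Fin 6) ℂ) (hf3 : f.IsHomogeneous 3)
    (hsm : ∀ x : Fin 6 → ℂ, (∀ i, eval x (pderiv i f) = 0) → x = 0)
    (F : (Fin 6 → ℂ) → (Fin 6 → ℂ) → (Fin 6 → ℂ) → ℂ)
    (hF_swap12 : ∀ x y z, F x y z = F y x z)
    (hF_swap23 : ∀ x y z, F x y z = F x z y)
    (hF_add : ∀ x x' y z, F (x + x') y z = F x y z + F x' y z)
    (hF_smul : ∀ (c : ℂ) (x y z : Fin 6 → ℂ), F (c • x) y z = c * F x y z)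
    (hF_diag : ∀ x, F x x x = eval x f)
    (W : MvPolynomial ((Fin 6 ⊕ Fin 6) ⊕ Fin 4) ℂ)
    (hW : ∀ (P₁ P₂ : Fin 6 → ℂ) (b : Fin 4 → ℂ),
      eval (Sum.elim (Sum.elim P₁ P₂) b) W =
        b 0 * F P₁ P₁ P₁ + b 1 * F P₁ P₁ P₂ + b 2 * F P₁ P₂ P₂ + b 3 * F P₂ P₂ P₂)
    (Φ₁ Φ₂ : Fin 6 → ℂ) (a : Fin 4 → ℂ)
    (hcrit : ∀ v, eval (Sum.elim (Sum.elim Φ₁ Φ₂) a) (pderiv v W) = 0)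
    (hind : LinearIndependent ℂ ![Φ₁, Φ₂]) :
    (∀ j, a j = 0) ∧ ∀ s t : ℂ, eval (s • Φ₁ + t • Φ₂) f = 0 :=
  critical_locus_on_X_minus_general f hsm F hF_swap12 hF_swap23 hF_add hF_smul hF_diag W hW Φ₁ Φ₂ a
    hcrit hind
end

section
/- Let ∇₊ = {(a,b) ∈ ℤ² : −2 ≤ b ≤ a ≤ 2} \ {(2,−2)}. Let S ⊆ ℤ² be any subset containing ∇₊ ∪ {(0,−3)} which is closed under the following rule: for every χ ∈ ℤ² and each of the three triples of offsets ((5,4),(4,2),(0,0)), ((5,5),(3,1),(1,0)), ((5,3),(4,1),(2,0)), whenever two of the three translates χ + offset lie in S, so does the third. Then (k,k) ∈ S for every integer k with −6 ≤ k ≤ 5. -/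
/-- The window `∇₊`: the triangle `{(a,b) : −2 ≤ b ≤ a ≤ 2}` minus `(2,−2)`. -/
def nablaPlus : Set (ℤ × ℤ) :=
  {p : ℤ × ℤ | -2 ≤ p.2 ∧ p.2 ≤ p.1 ∧ p.1 ≤ 2} \ {(2, -2)}

/-- `S` is closed under the two-out-of-three rule for the translates of the
offsets `o₁, o₂, o₃`: whenever two of `χ + o₁, χ + o₂, χ + o₃` lie in `S`,
so does the third. -/
def TwoOutOfThreeClosed (S : Set (ℤ × ℤ)) (o₁ o₂ o₃ : ℤ × ℤ) : Prop :=
  ∀ χ : ℤ × ℤ,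
    (χ + o₁ ∈ S → χ + o₂ ∈ S → χ + o₃ ∈ S) ∧
    (χ + o₁ ∈ S → χ + o₃ ∈ S → χ + o₂ ∈ S) ∧
    (χ + o₂ ∈ S → χ + o₃ ∈ S → χ + o₁ ∈ S)

/-- **Generation of the line bundles `(det T)^k`, `−6 ≤ k ≤ 5`.** Any set of
weights containing `∇₊ ∪ {(0,−3)}` and closed under the two-out-of-three rule
for each of the three triples of offsets (corresponding to the three-term exact
sequences `T₍₅,₄₎ → T₍₄,₂₎ → O`, `T₍₅,₅₎ → T₍₃,₁₎ → T₍₁,₀₎`,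
`T₍₅,₃₎ → T₍₄,₁₎ → T₍₂,₀₎`) contains all diagonal weights `(k,k)` with
`−6 ≤ k ≤ 5`. -/
theorem diagonal_weights_generated (S : Set (ℤ × ℤ))
    (hsub : nablaPlus ∪ {(0, -3)} ⊆ S)
    (h1 : TwoOutOfThreeClosed S (5, 4) (4, 2) (0, 0))
    (h2 : TwoOutOfThreeClosed S (5, 5) (3, 1) (1, 0))
    (h3 : TwoOutOfThreeClosed S (5, 3) (4, 1) (2, 0)) :
    ∀ k : ℤ, -6 ≤ k → k ≤ 5 → ((k, k) : ℤ × ℤ) ∈ S := by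
  have m_n1_n1 : ((-1,-1) : ℤ × ℤ) ∈ S := hsub (Or.inl ⟨by norm_num, by decide⟩)
  have m_0_0 : ((0,0) : ℤ × ℤ) ∈ S := hsub (Or.inl ⟨by norm_num, by decide⟩)
  have m_1_1 : ((1,1) : ℤ × ℤ) ∈ S := hsub (Or.inl ⟨by norm_num, by decide⟩)
  have m_n2_n2 : ((-2,-2) : ℤ × ℤ) ∈ S := hsub (Or.inl ⟨by norm_num, by decide⟩)
  have m_n1_n2 : ((-1,-2) : ℤ × ℤ) ∈ S := hsub (Or.inl ⟨by norm_num, by decide⟩)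
  have m_0_n3 : ((0,-3) : ℤ × ℤ) ∈ S := hsub (Or.inr rfl)
  have m_0_n2 : ((0,-2) : ℤ × ℤ) ∈ S := hsub (Or.inl ⟨by norm_num, by decide⟩)
  have m_0_n1 : ((0,-1) : ℤ × ℤ) ∈ S := hsub (Or.inl ⟨by norm_num, by decide⟩)
  have m_1_n2 : ((1,-2) : ℤ × ℤ) ∈ S := hsub (Or.inl ⟨by norm_num, by decide⟩)
  have m_1_n1 : ((1,-1) : ℤ × ℤ) ∈ S := hsub (Or.inl ⟨by norm_num, by decide⟩)
  have m_1_0 : ((1,0) : ℤ × ℤ) ∈ S := hsub (Or.inl ⟨by norm_num, by decide⟩)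
  have m_2_n1 : ((2,-1) : ℤ × ℤ) ∈ S := hsub (Or.inl ⟨by norm_num, by decide⟩)
  have m_2_0 : ((2,0) : ℤ × ℤ) ∈ S := hsub (Or.inl ⟨by norm_num, by decide⟩)
  have m_2_1 : ((2,1) : ℤ × ℤ) ∈ S := hsub (Or.inl ⟨by norm_num, by decide⟩)
  have m_2_2 : ((2,2) : ℤ × ℤ) ∈ S := hsub (Or.inl ⟨by norm_num, by decide⟩)
  have m_n3_n3 : ((-3,-3) : ℤ × ℤ) ∈ S := by
    have h := (h1 (-3,-3)).1
    norm_num [Prod.mk_add_mk] at h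
    exact h m_2_1 m_1_n1
  have m_n4_n5 : ((-4,-5) : ℤ × ℤ) ∈ S := by
    have h := (h1 (-4,-5)).1
    norm_num [Prod.mk_add_mk] at h
    exact h m_1_n1 m_0_n3
  have m_n6_n6 : ((-6,-6) : ℤ × ℤ) ∈ S := by
    have h := (h3 (-8,-6)).1
    norm_num [Prod.mk_add_mk] at h
    exact h m_n3_n3 m_n4_n5
  have m_n3_n4 : ((-3,-4) : ℤ × ℤ) ∈ S := by
    have h := (h1 (-3,-4)).1
    norm_num [Prod.mk_add_mk] at h
    exact h m_2_0 m_1_n2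
  have m_n5_n5 : ((-5,-5) : ℤ × ℤ) ∈ S := by
    have h := (h3 (-7,-5)).1
    norm_num [Prod.mk_add_mk] at h
    exact h m_n2_n2 m_n3_n4
  have m_n4_n4 : ((-4,-4) : ℤ × ℤ) ∈ S := by
    have h := (h1 (-4,-4)).1
    norm_num [Prod.mk_add_mk] at h
    exact h m_1_0 m_0_n2
  have m_3_3 : ((3,3) : ℤ × ℤ) ∈ S := by
    have h := (h2 (-2,-2)).2.2
    norm_num [Prod.mk_add_mk] at h
    exact h m_1_n1 m_n1_n2
  have m_4_4 : ((4,4) : ℤ × ℤ) ∈ S := by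
    have h := (h2 (-1,-1)).2.2
    norm_num [Prod.mk_add_mk] at h
    exact h m_2_0 m_0_n1
  have m_4_3 : ((4,3) : ℤ × ℤ) ∈ S := by
    have h := (h2 (-1,-2)).2.2
    norm_num [Prod.mk_add_mk] at h
    exact h m_2_n1 m_0_n2
  have m_5_5 : ((5,5) : ℤ × ℤ) ∈ S := by
    have h := (h3 (0,2)).2.2
    norm_num [Prod.mk_add_mk] at h
    exact h m_4_3 m_2_2

  intro k hk1 hk2
  interval_cases k <;> assumption
end
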